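/- Let $h$ be a Gamma random variable with shape $N$ (a positive integer) and rate $N$ (mean $1$). Then for every $x \geq 0$: $\Pr(h < x) \geq \left(1 - e^{-a N x}\right)^N$ where $a = (N!)^{-1/N}$, with equality as $x \to 0$ and $x \to \infty$ in the limiting sense; in particular the function $x \mapsto (1 - e^{-aNx})^N$ is a lower bound for the CDF of $h$. -/

import Mathlib

/-!
Put `c = (N!)^{-1/N} N` and `v(y) = (1 - e^{-cy})^N`. Because `c^N = N^N / N!`, the density of
`Gamma(N, N)` factors as `v'(t) · exp ψ(t)` with `ψ(t) = (N - 1) g(ct) - (N - c) t`, where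
`g(u) = log (u / (1 - e^{-u}))`. The function `g` is concave on `[0, ∞)` with `g(0) = 0`
(`g'' ≤ 0` amounts to `u ≤ 2 sinh (u / 2)`), so `ψ` is concave with `ψ(0) = 0`: it is
nonnegative up to some point and negative beyond it. Hence `CDF - v` first increases and then
decreases; as it vanishes at `0` and tends to `0` at infinity, it is nonnegative.
-/

open MeasureTheory ProbabilityTheory Real Set Filter Topology

theorem mul_exp_neg_half_le_one_sub_exp_neg {u : ℝ} (hu : 0 ≤ u) :
    u * exp (-(u / 2)) ≤ 1 - exp (-u) := by
  have hsinh : u / 2 ≤ sinh (u / 2) := self_le_sinh_iff.mpr (by positivity)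
  have hfactor : 1 - exp (-u) = exp (-(u / 2)) * (2 * sinh (u / 2)) := by
    rw [sinh_eq, mul_div_cancel₀ _ two_ne_zero, mul_sub, ← exp_add, ← exp_add, neg_add_cancel,
      exp_zero, ← neg_add, add_halves]
  rw [hfactor]
  nlinarith [exp_pos (-(u / 2))]

theorem one_sub_exp_neg_ne_zero {u : ℝ} (hu : u ≠ 0) : 1 - exp (-u) ≠ 0 := by
  rw [sub_ne_zero, ne_comm, Ne, exp_eq_one_iff]
  exact neg_ne_zero.mpr hu

theorem one_sub_exp_neg_pos {u : ℝ} (hu : 0 < u) : 0 < 1 - exp (-u) :=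
  sub_pos.mpr (exp_lt_one_iff.mpr (neg_neg_of_pos hu))

theorem hasDerivAt_one_sub_exp_neg (u : ℝ) :
    HasDerivAt (fun u ↦ 1 - exp (-u)) (exp (-u)) u := by
  simpa using ((hasDerivAt_neg u).exp).const_sub 1

/-- At `u = 0` the junk values `0 / 0 = 0` and `log 0 = 0` make this the continuous extension. -/
noncomputable def logDivOneSubExpNeg (u : ℝ) : ℝ := log (u / (1 - exp (-u)))

theorem hasDerivAt_logDivOneSubExpNeg {u : ℝ} (hu : u ≠ 0) :
    HasDerivAt logDivOneSubExpNeg (u⁻¹ - exp (-u) / (1 - exp (-u))) u := by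
  have hd := one_sub_exp_neg_ne_zero hu
  refine (((hasDerivAt_id' u).fun_div (hasDerivAt_one_sub_exp_neg u) hd).log
    (div_ne_zero hu hd)).congr_deriv ?_
  field_simp

theorem hasDerivAt_deriv_logDivOneSubExpNeg {u : ℝ} (hu : u ≠ 0) :
    HasDerivAt (fun u ↦ u⁻¹ - exp (-u) / (1 - exp (-u)))
      (-(u ^ 2)⁻¹ + exp (-u) / (1 - exp (-u)) ^ 2) u := by
  have hd := one_sub_exp_neg_ne_zero hu
  refine ((hasDerivAt_inv hu).sub
    ((hasDerivAt_neg u).exp.fun_div (hasDerivAt_one_sub_exp_neg u) hd)).congr_deriv ?_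
  field_simp
  ring

theorem tendsto_logDivOneSubExpNeg_zero :
    Tendsto logDivOneSubExpNeg (𝓝[>] 0) (𝓝 0) := by
  have hslope : Tendsto (fun u ↦ (1 - exp (-u)) / u) (𝓝[>] 0) (𝓝 1) := by
    have h := (hasDerivAt_iff_tendsto_slope.mp (hasDerivAt_one_sub_exp_neg 0)).mono_left
      (nhdsWithin_mono _ fun _ ↦ ne_of_gt)
    rw [neg_zero, exp_zero] at h
    refine h.congr fun u ↦ ?_
    simp [slope_def_field]
  have h := hslope.inv₀ one_ne_zero
  rw [inv_one] at h
  have h := (continuousAt_log one_ne_zero).tendsto.comp h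
  rw [log_one] at h
  refine h.congr fun u ↦ ?_
  simp [logDivOneSubExpNeg, inv_div]

theorem concaveOn_logDivOneSubExpNeg : ConcaveOn ℝ (Ici 0) logDivOneSubExpNeg := by
  have hcont : ContinuousOn logDivOneSubExpNeg (Ici 0) := by
    intro u hu
    rcases (mem_Ici.mp hu).eq_or_lt with rfl | hu
    · rw [← continuousWithinAt_Ioi_iff_Ici, ContinuousWithinAt]
      simpa [logDivOneSubExpNeg] using tendsto_logDivOneSubExpNeg_zero
    · exact (hasDerivAt_logDivOneSubExpNeg hu.ne').continuousAt.continuousWithinAt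
  refine concaveOn_of_hasDerivWithinAt2_nonpos (convex_Ici 0) hcont
    (fun u hu ↦ (hasDerivAt_logDivOneSubExpNeg (ne_of_gt (by simpa using hu))).hasDerivWithinAt)
    (fun u hu ↦
      (hasDerivAt_deriv_logDivOneSubExpNeg (ne_of_gt (by simpa using hu))).hasDerivWithinAt)
    fun u hu ↦ ?_
  rw [interior_Ici] at hu
  have hsq : u ^ 2 * exp (-u) ≤ (1 - exp (-u)) ^ 2 := by
    simpa [mul_pow, ← exp_nat_mul, mul_div_cancel₀] using
      pow_le_pow_left₀ (mul_nonneg hu.le (exp_pos _).le)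
        (mul_exp_neg_half_le_one_sub_exp_neg hu.le) 2
  rw [neg_add_nonpos_iff, div_le_iff₀ (pow_pos (one_sub_exp_neg_pos hu) 2), inv_mul_eq_div,
    le_div_iff₀ (pow_pos hu 2)]
  linarith

theorem concaveOn_logDivOneSubExpNeg_comp_mul {c : ℝ} (hc : 0 ≤ c) :
    ConcaveOn ℝ (Ici 0) fun t ↦ logDivOneSubExpNeg (c * t) :=
  (concaveOn_logDivOneSubExpNeg.comp_linearMap (c • LinearMap.id)).subset
    (fun _ ht ↦ mul_nonneg hc ht) (convex_Ici 0)

theorem hasDerivAt_one_sub_exp_neg_mul_pow (c : ℝ) (n : ℕ) (t : ℝ) :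
    HasDerivAt (fun y ↦ (1 - exp (-(c * y))) ^ n)
      (n * (1 - exp (-(c * t))) ^ (n - 1) * (c * exp (-(c * t)))) t :=
  (((hasDerivAt_one_sub_exp_neg (c * t)).comp t ((hasDerivAt_id t).const_mul c)).pow
    n).congr_deriv (by simp only [mul_one, Function.comp_apply]; ring)

theorem tendsto_one_sub_exp_neg_mul_pow {c : ℝ} (hc : 0 < c) (n : ℕ) :
    Tendsto (fun y ↦ (1 - exp (-(c * y))) ^ n) atTop (𝓝 1) := by
  simpa using ((tendsto_const_nhds (x := (1 : ℝ))).sub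
    (tendsto_exp_neg_atTop_nhds_zero.comp (tendsto_id.const_mul_atTop hc))).pow n

theorem ConcaveOn.nonneg_of_le {f : ℝ → ℝ} (hf : ConcaveOn ℝ (Ici 0) f) (hf0 : 0 ≤ f 0)
    {t x : ℝ} (ht : 0 ≤ t) (htx : t ≤ x) (hx : 0 ≤ f x) : 0 ≤ f t :=
  (le_min hf0 hx).trans <| hf.ge_on_segment self_mem_Ici (ht.trans htx)
    (by rw [segment_eq_Icc (ht.trans htx)]; exact ⟨ht, htx⟩)

theorem nonneg_of_hasDerivAt_of_nonneg_or_nonpos {h h' : ℝ → ℝ} (hc : ContinuousOn h (Ici 0))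
    (hd : ∀ t > 0, HasDerivAt h (h' t) t) (h0 : h 0 = 0) (htop : Tendsto h atTop (𝓝 0))
    {x : ℝ} (hx : 0 ≤ x) (hsign : (∀ t ∈ Ioo 0 x, 0 ≤ h' t) ∨ ∀ t ∈ Ioi x, h' t ≤ 0) :
    0 ≤ h x := by
  rcases hsign with hpos | hneg
  · have hmono : MonotoneOn h (Icc 0 x) := by
      refine monotoneOn_of_hasDerivWithinAt_nonneg (f' := h') (convex_Icc 0 x)
        (hc.mono Icc_subset_Ici_self) (fun t ht ↦ ?_) (fun t ht ↦ ?_) <;>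
        rw [interior_Icc] at ht
      exacts [(hd t ht.1).hasDerivWithinAt, hpos t ht]
    exact h0 ▸ hmono (left_mem_Icc.mpr hx) (right_mem_Icc.mpr hx) hx
  · have hanti : AntitoneOn h (Ici x) := by
      refine antitoneOn_of_hasDerivWithinAt_nonpos (f' := h') (convex_Ici x)
        (hc.mono (Ici_subset_Ici.mpr hx)) (fun t ht ↦ ?_) (fun t ht ↦ ?_) <;>
        rw [interior_Ici] at ht
      exacts [(hd t (hx.trans_lt ht)).hasDerivWithinAt, hneg t ht]
    refine le_of_tendsto htop ?_
    filter_upwards [eventually_ge_atTop x] with s hs using hanti self_mem_Ici hs hs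

namespace ProbabilityTheory

variable {a r : ℝ}

theorem integrable_gammaPDFReal (ha : 0 < a) (hr : 0 < r) : Integrable (gammaPDFReal a r) := by
  refine ⟨(stronglyMeasurable_gammaPDFReal a r).aestronglyMeasurable, ?_⟩
  rw [hasFiniteIntegral_iff_ofReal (ae_of_all _ (gammaPDFReal_nonneg ha hr))]
  exact (lintegral_gammaPDF_eq_one ha hr).trans_lt ENNReal.one_lt_top

theorem continuousAt_gammaPDFReal {t : ℝ} (ht : 0 < t) : ContinuousAt (gammaPDFReal a r) t := by
  have hcont : ContinuousAt (fun s ↦ r ^ a / Gamma a * s ^ (a - 1) * exp (-(r * s))) t := by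
    fun_prop (disch := exact Or.inl ht.ne')
  refine hcont.congr ?_
  filter_upwards [Ioi_mem_nhds ht] with s hs using (if_pos (le_of_lt hs)).symm

theorem cdf_gammaMeasure_eq_intervalIntegral (ha : 0 < a) (hr : 0 < r) (y : ℝ) :
    cdf (gammaMeasure a r) y = ∫ t in 0..y, gammaPDFReal a r t := by
  have hint := integrable_gammaPDFReal ha hr
  have hzero : ∫ t in Iic 0, gammaPDFReal a r t = 0 := by
    rw [← setIntegral_congr_set Iio_ae_eq_Iic]
    exact setIntegral_eq_zero_of_forall_eq_zero fun t ht ↦ if_neg (not_le.mpr ht)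
  rw [cdf_gammaMeasure_eq_integral ha hr, ← intervalIntegral.integral_Iic_sub_Iic
    hint.integrableOn hint.integrableOn, hzero, sub_zero]

theorem continuous_cdf_gammaMeasure (ha : 0 < a) (hr : 0 < r) :
    Continuous (cdf (gammaMeasure a r)) := by
  rw [funext (cdf_gammaMeasure_eq_intervalIntegral ha hr)]
  exact intervalIntegral.continuous_primitive
    (fun _ _ ↦ (integrable_gammaPDFReal ha hr).intervalIntegrable) 0

theorem hasDerivAt_cdf_gammaMeasure (ha : 0 < a) (hr : 0 < r) {t : ℝ} (ht : 0 < t) :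
    HasDerivAt (cdf (gammaMeasure a r)) (gammaPDFReal a r t) t := by
  rw [funext (cdf_gammaMeasure_eq_intervalIntegral ha hr)]
  exact intervalIntegral.integral_hasDerivAt_right
    ((integrable_gammaPDFReal ha hr).intervalIntegrable (a := 0))
    (stronglyMeasurable_gammaPDFReal a r).stronglyMeasurableAtFilter
    (continuousAt_gammaPDFReal ht)

theorem gammaPDFReal_natCast {n : ℕ} (hn : 0 < n) {t : ℝ} (ht : 0 ≤ t) :
    gammaPDFReal n r t = r ^ n / (n - 1).factorial * t ^ (n - 1) * exp (-(r * t)) := by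
  obtain ⟨m, rfl⟩ := Nat.exists_eq_succ_of_ne_zero hn.ne'
  simp [gammaPDFReal, ht, Gamma_nat_eq_factorial, ← rpow_natCast]

end ProbabilityTheory

noncomputable def alzerRate (N : ℕ) : ℝ := (N.factorial : ℝ) ^ (-(1 : ℝ) / N) * N

noncomputable def alzerExponent (N : ℕ) (t : ℝ) : ℝ :=
  (N - 1) * logDivOneSubExpNeg (alzerRate N * t) - (N - alzerRate N) * t

section Alzer

variable {N : ℕ}

theorem alzerRate_pos (hN : 0 < N) : 0 < alzerRate N := by
  unfold alzerRate; positivity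

theorem alzerRate_pow (hN : 0 < N) : alzerRate N ^ N = N ^ N / N.factorial := by
  rw [alzerRate, mul_pow, ← rpow_natCast _ N, ← rpow_mul (by positivity),
    div_mul_cancel₀ _ (by positivity), rpow_neg_one, inv_mul_eq_div]

theorem alzerExponent_zero : alzerExponent N 0 = 0 := by
  simp [alzerExponent, logDivOneSubExpNeg]

theorem concaveOn_alzerExponent (hN : 0 < N) : ConcaveOn ℝ (Ici 0) (alzerExponent N) :=
  ((concaveOn_logDivOneSubExpNeg_comp_mul (alzerRate_pos hN).le).smul
    (sub_nonneg.mpr (Nat.one_le_cast.mpr hN))).sub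
    ((((N - alzerRate N : ℝ) • LinearMap.id : ℝ →ₗ[ℝ] ℝ)).convexOn (convex_Ici 0))

theorem gammaPDFReal_eq_mul_exp_alzerExponent (hN : 0 < N) {t : ℝ} (ht : 0 < t) :
    gammaPDFReal N N t = N * (1 - exp (-(alzerRate N * t))) ^ (N - 1) *
      (alzerRate N * exp (-(alzerRate N * t))) * exp (alzerExponent N t) := by
  set c := alzerRate N
  have hc : 0 < c := alzerRate_pos hN
  have he : 0 < 1 - exp (-(c * t)) := one_sub_exp_neg_pos (mul_pos hc ht)
  have hexp : exp (alzerExponent N t) =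
      (c * t / (1 - exp (-(c * t)))) ^ (N - 1) * exp (-((N - c) * t)) := by
    rw [alzerExponent, sub_eq_add_neg, exp_add, ← Nat.cast_pred hN, exp_nat_mul,
      logDivOneSubExpNeg, exp_log (by positivity)]
  have hnum : (N : ℝ) ^ N = c * c ^ (N - 1) * (N * (N - 1).factorial) := by
    rw [← pow_succ', Nat.sub_add_cancel hN, alzerRate_pow hN, ← Nat.cast_mul,
      Nat.mul_factorial_pred hN.ne', div_mul_cancel₀ _ (by positivity)]
  have hsplit : exp (-(N * t)) = exp (-(c * t)) * exp (-((N - c) * t)) := by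
    rw [← exp_add]; ring_nf
  rw [gammaPDFReal_natCast hN ht.le, hexp, hnum, hsplit, div_pow, mul_pow]
  field_simp

theorem one_sub_exp_neg_alzerRate_mul_pow_le_cdf (hN : 0 < N) {x : ℝ} (hx : 0 ≤ x) :
    (1 - exp (-(alzerRate N * x))) ^ N ≤ cdf (gammaMeasure N N) x := by
  have hN' : (0 : ℝ) < N := Nat.cast_pos.mpr hN
  set c := alzerRate N
  have hc : 0 < c := alzerRate_pos hN
  set v' := fun t ↦ N * (1 - exp (-(c * t))) ^ (N - 1) * (c * exp (-(c * t)))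
  have hv' : ∀ t > 0, 0 ≤ v' t := fun t ht ↦
    mul_nonneg (mul_nonneg hN'.le (pow_nonneg (one_sub_exp_neg_pos (mul_pos hc ht)).le _))
      (mul_nonneg hc.le (exp_pos _).le)
  have hdiff : ∀ t > 0, gammaPDFReal N N t - v' t = v' t * (exp (alzerExponent N t) - 1) :=
    fun t ht ↦ by rw [gammaPDFReal_eq_mul_exp_alzerExponent hN ht]; ring
  have hψ := concaveOn_alzerExponent hN
  refine sub_nonneg.mp (nonneg_of_hasDerivAt_of_nonneg_or_nonpos
    (h' := fun t ↦ gammaPDFReal N N t - v' t) (Continuous.continuousOn ?_)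
    (fun t ht ↦ (hasDerivAt_cdf_gammaMeasure hN' hN' ht).sub
      (hasDerivAt_one_sub_exp_neg_mul_pow c N t)) ?_ ?_ hx ?_)
  · exact (continuous_cdf_gammaMeasure hN' hN').sub (by fun_prop)
  · simp [cdf_gammaMeasure_eq_intervalIntegral hN' hN', hN.ne']
  · rw [← sub_self (1 : ℝ)]
    exact (tendsto_cdf_atTop _).sub (tendsto_one_sub_exp_neg_mul_pow hc N)
  · rcases le_or_gt 0 (alzerExponent N x) with hpos | hneg
    · refine Or.inl fun t ht ↦ ?_
      rw [hdiff t ht.1]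
      exact mul_nonneg (hv' t ht.1) (sub_nonneg.mpr (one_le_exp
        (hψ.nonneg_of_le alzerExponent_zero.ge ht.1.le ht.2.le hpos)))
    · refine Or.inr fun t ht ↦ ?_
      have hψt : alzerExponent N t < 0 := lt_of_not_ge fun h ↦
        hneg.not_ge (hψ.nonneg_of_le alzerExponent_zero.ge hx (le_of_lt ht) h)
      rw [hdiff t (hx.trans_lt ht)]
      exact mul_nonpos_of_nonneg_of_nonpos (hv' t (hx.trans_lt ht))
        (sub_nonpos.mpr (exp_le_one_iff.mpr hψt.le))

end Alzer

/-- Alzer-type lower bound on the CDF of the normalized Gamma distribution: for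
`h ~ Gamma(N, N)` with `N ≥ 1` an integer and `a = (N!)^{-1/N}`,
`Pr(h < x) ≥ (1 - e^{-aNx})^N` for all `x ≥ 0`. -/
theorem gamma_cdf_lower_bound (N : ℕ) (hN : 0 < N) (x : ℝ) (hx : 0 ≤ x) :
    ENNReal.ofReal
        ((1 - Real.exp (-((N.factorial : ℝ) ^ (-(1 : ℝ) / (N : ℝ)) * (N : ℝ) * x))) ^ N) ≤
      gammaMeasure (N : ℝ) (N : ℝ) (Set.Iio x) := by
  have hN' : (0 : ℝ) < N := Nat.cast_pos.mpr hN
  have := isProbabilityMeasure_gammaMeasure hN' hN'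
  have hatom : gammaMeasure N N {x} = 0 :=
    withDensity_absolutelyContinuous _ _ (measure_singleton x)
  calc _ ≤ ENNReal.ofReal (cdf (gammaMeasure N N) x) :=
        ENNReal.ofReal_le_ofReal (one_sub_exp_neg_alzerRate_mul_pow_le_cdf hN hx)
    _ = gammaMeasure N N (Iic x) := ofReal_cdf _ x
    _ = gammaMeasure N N (Iio x) := measure_congr (Iio_ae_eq_Iic' hatom).symm
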